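/- arXiv:2409.18784 — 3 statements merged into one kernel-verified Lean document; each statement's English description precedes it below -/
import Mathlib

section
/- For p₀(r) = ((3-ln 2)/(4(ln 2)²)) ln(r) + (1+ln 2)/(4 ln 2) + (r² ln(r/2) - r²)/(4 ln 2), the derivative at r=1 is p₀'(1) = 3/(4 (ln 2)²) - 1/(2 ln 2) - 1/2, and the quantity μ'(0) := -1 + 2 p₀'(1) = -2 + 3/(2(ln 2)²) - 1/ln(2) satisfies μ'(0) < -3/10. -/
open Real

theorem hasDerivAt_sq_mul_log_div {c r : ℝ} (hc : c ≠ 0) (hr : r ≠ 0) :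
    HasDerivAt (fun x : ℝ => x ^ 2 * log (x / c)) (2 * r * log (r / c) + r) r := by
  have hlog : HasDerivAt (fun x : ℝ => log (x / c)) (1 / r) r := by
    have := ((hasDerivAt_id' r).div_const c).log (div_ne_zero hr hc)
    rwa [show 1 / c / (r / c) = 1 / r by field_simp] at this
  have hsq : HasDerivAt (fun x : ℝ => x ^ 2) (2 * r) r := by
    simpa using hasDerivAt_pow 2 r
  exact (hsq.fun_mul hlog).congr_deriv (by field_simp)

theorem hasDerivAt_log_add_sq_mul_log_div (a b d : ℝ) {c r : ℝ} (hc : c ≠ 0) (hr : r ≠ 0) :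
    HasDerivAt (fun x : ℝ => a * log x + b + (x ^ 2 * log (x / c) - x ^ 2) / d)
      (a / r + (2 * r * log (r / c) - r) / d) r := by
  have hsq : HasDerivAt (fun x : ℝ => x ^ 2) (2 * r) r := by
    simpa using hasDerivAt_pow 2 r
  exact ((((hasDerivAt_log hr).const_mul a).add_const b).fun_add
    (((hasDerivAt_sq_mul_log_div hc hr).fun_sub hsq).div_const d)).congr_deriv (by ring)

-- `0.6902` sits just above `0.69019…`, the positive root of `3 - 2 L - 17/5 L ^ 2`.
theorem neg_two_add_three_div_sq_sub_inv_lt {L : ℝ} (hL : 0.6902 < L) :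
    -2 + 3 / (2 * L ^ 2) - 1 / L < -3 / 10 := by
  have hL0 : 0 < L := by linarith
  rw [← sub_neg]
  have key : -2 + 3 / (2 * L ^ 2) - 1 / L - -3 / 10 = (3 - 2 * L - 17 / 5 * L ^ 2) / (2 * L ^ 2) := by
    field_simp
    ring
  rw [key]
  apply div_neg_of_neg_of_pos _ (by positivity)
  nlinarith

theorem stmt3 (p₀ : ℝ → ℝ)
    (hdef : ∀ r : ℝ, p₀ r =
      ((3 - Real.log 2) / (4 * (Real.log 2)^2)) * Real.log r
      + (1 + Real.log 2) / (4 * Real.log 2)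
      + (r^2 * Real.log (r/2) - r^2) / (4 * Real.log 2)) :
    deriv p₀ 1 = 3 / (4 * (Real.log 2)^2) - 1 / (2 * Real.log 2) - 1/2 ∧
    -1 + 2 * deriv p₀ 1 = -2 + 3 / (2 * (Real.log 2)^2) - 1 / Real.log 2 ∧
    -1 + 2 * deriv p₀ 1 < -3/10 := by
  have hlog2 : 0.6902 < log 2 := lt_trans (by norm_num) log_two_gt_d9
  have hd : deriv p₀ 1 = 3 / (4 * (log 2) ^ 2) - 1 / (2 * log 2) - 1 / 2 := by
    rw [funext hdef, (hasDerivAt_log_add_sq_mul_log_div _ _ _ two_ne_zero one_ne_zero).deriv,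
      one_div, log_inv]
    field_simp
    ring
  have hmu : -1 + 2 * deriv p₀ 1 = -2 + 3 / (2 * (log 2) ^ 2) - 1 / log 2 := by
    rw [hd]
    ring
  exact ⟨hd, hmu, hmu ▸ neg_two_add_three_div_sq_sub_inv_lt hlog2⟩
end

section
/- Let n ∈ ℕ and a_0, …, a_n ∈ ℝ, and define f(z) = Σ_{j=0}^n a_j cos((2j+1)πz/2). Then for every z ∈ (-1,1), f(z)/cos(πz/2) = Σ_{j=0}^n b_j cos(jπz), where b_0 = Σ_{k=0}^n (-1)^k a_k and b_j = 2 Σ_{k=j}^n (-1)^{k-j} a_k for 1 ≤ j ≤ n. -/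
open Real

lemma aux13 (z : ℝ) : ∀ n : ℕ, Real.cos ((2*n+1) * π * z / 2)
    = Real.cos (π*z/2) * ((-1:ℝ)^n
      + ∑ j ∈ Finset.Icc 1 n, 2*(-1:ℝ)^(n-j) * Real.cos (j*π*z)) := by
  intro n
  induction n with
  | zero => simp
  | succ n ih =>
    have key : Real.cos ((2*(n+1:ℕ)+1) * π * z / 2)
        = 2 * Real.cos ((n+1:ℕ)*π*z) * Real.cos (π*z/2) - Real.cos ((2*n+1) * π * z / 2) := by
      have h1 : ((n:ℝ)+1)*π*z + π*z/2 = (2*(n+1:ℕ)+1) * π * z / 2 := by push_cast; ring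
      have h2 : ((n:ℝ)+1)*π*z - π*z/2 = (2*(n:ℕ)+1) * π * z / 2 := by push_cast; ring
      have := Real.cos_add (((n:ℝ)+1)*π*z) (π*z/2)
      have := Real.cos_sub (((n:ℝ)+1)*π*z) (π*z/2)
      push_cast at *
      rw [← h1, ← h2] at *
      linarith
    rw [key, ih, Finset.sum_Icc_succ_top (by omega : 1 ≤ n+1)]
    have hsum : ∑ j ∈ Finset.Icc 1 n, 2*(-1:ℝ)^(n+1-j) * Real.cos (j*π*z)
        = -∑ j ∈ Finset.Icc 1 n, 2*(-1:ℝ)^(n-j) * Real.cos (j*π*z) := by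
      rw [← Finset.sum_neg_distrib]
      apply Finset.sum_congr rfl
      intro j hj
      have hjn : j ≤ n := (Finset.mem_Icc.mp hj).2
      have : n + 1 - j = (n - j) + 1 := by omega
      rw [this, pow_succ]
      ring
    rw [hsum]
    simp only [Nat.sub_self, pow_zero]
    push_cast
    rw [pow_succ]
    ring

theorem stmt13 (n : ℕ) (a : ℕ → ℝ) :
    ∀ z ∈ Set.Ioo (-1:ℝ) 1,
      (∑ j ∈ Finset.range (n+1), a j * Real.cos ((2*j+1) * π * z / 2))
          / Real.cos (π * z / 2)
      = (∑ k ∈ Finset.range (n+1), (-1:ℝ)^k * a k)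
        + ∑ j ∈ Finset.Icc 1 n,
            (2 * ∑ k ∈ Finset.Icc j n, (-1:ℝ)^(k-j) * a k) * Real.cos (j * π * z) := by
  intro z hz
  obtain ⟨hz1, hz2⟩ := hz
  have hpi := Real.pi_pos
  have hcz : Real.cos (π * z / 2) ≠ 0 := by
    have : Real.cos (π * z / 2) > 0 := by
      apply Real.cos_pos_of_mem_Ioo
      constructor <;> [nlinarith; nlinarith]
    linarith
  rw [div_eq_iff hcz]
  simp only [aux13 z]
  have swap : ∑ k ∈ Finset.range (n+1), ∑ j ∈ Finset.Icc 1 k,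
        a k * (2*(-1:ℝ)^(k-j) * Real.cos (j*π*z))
      = ∑ j ∈ Finset.Icc 1 n, ∑ k ∈ Finset.Icc j n,
        a k * (2*(-1:ℝ)^(k-j) * Real.cos (j*π*z)) := by
    rw [Finset.sum_sigma', Finset.sum_sigma']
    apply Finset.sum_nbij' (fun p => ⟨p.2, p.1⟩) (fun p => ⟨p.2, p.1⟩)
    · rintro ⟨k, j⟩ h
      simp only [Finset.mem_sigma, Finset.mem_range, Finset.mem_Icc] at h ⊢
      omega
    · rintro ⟨j, k⟩ h
      simp only [Finset.mem_sigma, Finset.mem_range, Finset.mem_Icc] at h ⊢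
      omega
    · rintro ⟨k, j⟩ _; rfl
    · rintro ⟨j, k⟩ _; rfl
    · rintro ⟨k, j⟩ _; rfl
  have inner : ∀ j : ℕ, (2 * ∑ k ∈ Finset.Icc j n, (-1:ℝ)^(k-j) * a k) * Real.cos (j*π*z)
      = ∑ k ∈ Finset.Icc j n, a k * (2*(-1:ℝ)^(k-j) * Real.cos (j*π*z)) := by
    intro j
    rw [Finset.mul_sum, Finset.sum_mul]
    exact Finset.sum_congr rfl fun k _ => by ring
  calc ∑ k ∈ Finset.range (n+1), a k * (Real.cos (π*z/2) * ((-1:ℝ)^k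
          + ∑ j ∈ Finset.Icc 1 k, 2*(-1:ℝ)^(k-j) * Real.cos (j*π*z)))
      = Real.cos (π*z/2) * ((∑ k ∈ Finset.range (n+1), (-1:ℝ)^k * a k)
          + ∑ k ∈ Finset.range (n+1), ∑ j ∈ Finset.Icc 1 k,
              a k * (2*(-1:ℝ)^(k-j) * Real.cos (j*π*z))) := by
        rw [mul_add, Finset.mul_sum, Finset.mul_sum, ← Finset.sum_add_distrib]
        refine Finset.sum_congr rfl fun k _ => ?_
        rw [← Finset.mul_sum]
        ring
      _ = _ := by
        rw [swap]
        simp only [inner]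
        ring
end

section
/- Let n ∈ ℕ, a_0, …, a_n ∈ ℝ, and C > 0 with a_0 - Σ_{j=1}^n (2j+1)|a_j| ≥ C. Then the odd cosine sum f(z) = Σ_{j=0}^n a_j cos((2j+1)πz/2) satisfies f(z) ≥ C cos(πz/2) for all z ∈ (-1,1); in particular f(z) > 0 on (-1,1). -/
open Real

lemma aux_cos (x : ℝ) (hx : 0 ≤ Real.cos x) :
    ∀ j : ℕ, |Real.cos ((2*j+1) * x)| ≤ (2*j+1) * Real.cos x := by
  intro j
  induction j with
  | zero => simpa using le_of_eq (abs_of_nonneg hx)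
  | succ j ih =>
    have h1 : ((2*(j+1:ℕ)+1) : ℝ) * x = (2*j+1)*x + 2*x := by push_cast; ring
    rw [h1, Real.cos_add]
    have hs2 : |Real.sin (2*x)| ≤ 2 * Real.cos x := by
      rw [Real.sin_two_mul, abs_mul, abs_mul, abs_of_nonneg hx, abs_two]
      nlinarith [abs_nonneg (Real.sin x), Real.neg_one_le_sin x, Real.sin_le_one x,
        abs_le.mpr ⟨Real.neg_one_le_sin x, Real.sin_le_one x⟩]
    have hc2 : |Real.cos (2*x)| ≤ 1 := Real.abs_cos_le_one _
    have hs1 : |Real.sin ((2*j+1)*x)| ≤ 1 := Real.abs_sin_le_one _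
    have tri : |Real.cos ((2*j+1)*x) * Real.cos (2*x) - Real.sin ((2*j+1)*x) * Real.sin (2*x)|
        ≤ |Real.cos ((2*j+1)*x)| * |Real.cos (2*x)| + |Real.sin ((2*j+1)*x)| * |Real.sin (2*x)| := by
      calc _ ≤ |Real.cos ((2*j+1)*x) * Real.cos (2*x)| + |Real.sin ((2*j+1)*x) * Real.sin (2*x)| :=
            abs_sub _ _
        _ = _ := by rw [abs_mul, abs_mul]
    have hcast : ((2*(j+1:ℕ)+1) : ℝ) = (2*j+1) + 2 := by push_cast; ring
    rw [hcast]
    nlinarith [abs_nonneg (Real.cos ((2*j+1)*x)), abs_nonneg (Real.sin ((2*j+1)*x)),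
      abs_nonneg (Real.sin (2*x)), abs_nonneg (Real.cos (2*x)),
      mul_le_mul_of_nonneg_left hc2 (abs_nonneg (Real.cos ((2*j+1)*x))),
      mul_le_mul_of_nonneg_right hs2 (abs_nonneg (Real.sin ((2*j+1)*x))),
      mul_le_mul_of_nonneg_right hs1 hx]

theorem stmt14 (n : ℕ) (a : ℕ → ℝ) (C : ℝ) (hC : 0 < C)
    (hdom : C ≤ a 0 - ∑ j ∈ Finset.Icc 1 n, (2*j+1) * |a j|) :
    ∀ z ∈ Set.Ioo (-1:ℝ) 1,
      C * Real.cos (π * z / 2)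
        ≤ ∑ j ∈ Finset.range (n+1), a j * Real.cos ((2*j+1) * π * z / 2) := by
  intro z hz
  set x := π * z / 2 with hxdef
  have hmem : x ∈ Set.Ioo (-(π/2)) (π/2) := by
    constructor <;> nlinarith [Real.pi_pos, hz.1, hz.2]
  have hcos : 0 < Real.cos x := Real.cos_pos_of_mem_Ioo hmem
  have key : ∀ j : ℕ, -((2*j+1) * |a j| * Real.cos x) ≤ a j * Real.cos ((2*j+1) * π * z / 2) := by
    intro j
    have e : ((2*j+1):ℝ) * π * z / 2 = (2*j+1) * x := by rw [hxdef]; ring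
    rw [e]
    have h := aux_cos x hcos.le j
    have h2 : |a j * Real.cos ((2*j+1)*x)| ≤ (2*j+1) * |a j| * Real.cos x := by
      rw [abs_mul]
      calc |a j| * |Real.cos ((2*j+1)*x)| ≤ |a j| * ((2*j+1) * Real.cos x) :=
            mul_le_mul_of_nonneg_left h (abs_nonneg _)
        _ = (2*j+1) * |a j| * Real.cos x := by ring
    linarith [neg_abs_le (a j * Real.cos ((2*j+1)*x))]
  rw [Finset.sum_range_succ']
  have e0 : a 0 * Real.cos ((2*(0:ℕ)+1) * π * z / 2) = a 0 * Real.cos x := by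
    norm_num [hxdef]
  have hS : ∑ j ∈ Finset.Icc 1 n, ((2*j+1) : ℝ) * |a j| =
      ∑ i ∈ Finset.range n, ((2*(i+1)+1) : ℝ) * |a (i+1)| := by
    rw [← Finset.Ico_add_one_right_eq_Icc, Finset.sum_Ico_eq_sum_range]
    refine Finset.sum_congr rfl fun i _ => ?_
    push_cast; ring_nf
  have hbound : -((∑ j ∈ Finset.Icc 1 n, ((2*j+1) : ℝ) * |a j|) * Real.cos x)
      ≤ ∑ i ∈ Finset.range n, a (i+1) * Real.cos ((2*(i+1:ℕ)+1) * π * z / 2) := by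
    rw [hS, Finset.sum_mul, ← Finset.sum_neg_distrib]
    refine Finset.sum_le_sum fun i _ => ?_
    have := key (i+1)
    push_cast at this ⊢
    linarith
  have ha0 : a 0 * Real.cos x - (∑ j ∈ Finset.Icc 1 n, ((2*j+1):ℝ) * |a j|) * Real.cos x
      ≥ C * Real.cos x := by nlinarith
  calc C * Real.cos x ≤ a 0 * Real.cos x - (∑ j ∈ Finset.Icc 1 n, ((2*j+1):ℝ) * |a j|) * Real.cos x := ha0
    _ ≤ (∑ i ∈ Finset.range n, a (i+1) * Real.cos ((2*(i+1:ℕ)+1) * π * z / 2)) + a 0 * Real.cos ((2*(0:ℕ)+1) * π * z / 2) := by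
        rw [e0]; linarith [hbound]
end
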